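/- Let G be a graph and let w be a support vertex of G whose set of leaf neighbors is L_G(w) = {v_1, …, v_t} with t ≥ 1. Let H be the induced subgraph of G on V(G) ∖ (L_G(w) ∪ {w}). Suppose every vertex of N_G(w) ∖ L_G(w) is a support vertex of G. Then |𝒟(G)| = (1 + 2^t)·|𝒟(H)| and Σ_{S∈𝒟(G)} |S| = (t + (t+2)·2^{t−1})·|𝒟(H)| + (1 + 2^t)·(Σ_{S∈𝒟(H)} |S|). -/

import Mathlib

/-!
Let `L` be the set of leaves at `w` and `H = G - (L ∪ {w})`. A dominating set `S` of `G` splits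
into its part `D` in `H` and its trace on `L ∪ {w}`. If `w ∉ S`, every leaf at `w` lies in `S`;
if `w ∈ S`, any set of them may. The part `D` dominates `H`: a vertex `x ∉ S` of `H` dominated by
`w` is a non-leaf neighbour of `w`, so it carries a leaf `y` outside `L ∪ {w}`, and `y ∈ S`
because its only neighbour `x` is not. Conversely every such pair glues to a dominating set
(this needs `L ≠ ∅` to dominate `w`), so `𝒟(G) ≅ 𝒟(H) × T` for the family `T` of admissible
traces, which has `1 + 2^t` members of total size `t + (t + 2) 2^(t-1)`.
-/

open scoped Classical

/-- The family of all dominating sets of `G`, as a `Finset` of `Finset`s. -/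
noncomputable def domSets {V : Type*} [Fintype V] (G : SimpleGraph V) :
    Finset (Finset V) :=
  Finset.univ.filter fun S => ∀ v ∉ S, ∃ u ∈ S, G.Adj u v

/-- The average order of a dominating set of `G`. -/
noncomputable def avd {V : Type*} [Fintype V] (G : SimpleGraph V) : ℚ :=
  (∑ S ∈ domSets G, (S.card : ℚ)) / ((domSets G).card : ℚ)

/-- A leaf is a vertex of degree one. -/
noncomputable def IsLeaf {V : Type*} [Fintype V] (G : SimpleGraph V) (v : V) : Prop :=
  G.degree v = 1

/-- The set of leaf neighbors of `w` in `G`. -/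
noncomputable def leafNbrSet {V : Type*} [Fintype V] (G : SimpleGraph V) (w : V) : Set V :=
  {v | G.Adj w v ∧ IsLeaf G v}

/-- A support vertex is a vertex adjacent to at least one leaf. -/
noncomputable def IsSupport {V : Type*} [Fintype V] (G : SimpleGraph V) (w : V) : Prop :=
  ∃ v, G.Adj w v ∧ IsLeaf G v

open Finset

theorem Finset.sum_card_powerset {α : Type*} (s : Finset α) :
    ∑ A ∈ s.powerset, #A = #s * 2 ^ (#s - 1) := by
  rw [sum_powerset_apply_card (fun m => m), ← Nat.sum_range_mul_choose]
  simp only [smul_eq_mul, mul_comm]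

section Split

variable {V : Type*} {s : Set V}

theorem card_map_union_of_notMem (D : Finset s) {c : Finset V} (hc : ∀ x ∈ c, x ∉ s) :
    #(D.map (Function.Embedding.subtype _) ∪ c) = #D + #c := by
  rw [card_union_of_disjoint, card_map]
  exact disjoint_left.mpr fun x hxD hxc => hc x hxc (by aesop)

variable [DecidablePred (· ∈ s)]

theorem map_subtype_union_filter_notMem (S : Finset V) :
    (S.subtype (· ∈ s)).map (Function.Embedding.subtype _) ∪ S.filter (· ∉ s) = S := by
  rw [subtype_map, filter_union_filter_not_eq]

theorem subtype_map_union_of_notMem (D : Finset s) {c : Finset V} (hc : ∀ x ∈ c, x ∉ s) :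
    (D.map (Function.Embedding.subtype _) ∪ c).subtype (· ∈ s) = D := by
  ext x
  simp only [mem_subtype, mem_union, mem_map, Function.Embedding.coe_subtype, Subtype.val_inj,
    exists_eq_right]
  exact or_iff_left (hc x.1 · x.2)

theorem filter_map_union_of_notMem (D : Finset s) {c : Finset V} (hc : ∀ x ∈ c, x ∉ s) :
    (D.map (Function.Embedding.subtype _) ∪ c).filter (· ∉ s) = c := by
  ext x
  have := hc x
  aesop

theorem sum_eq_sum_product_of_split {M : Type*} [AddCommMonoid M] (f : Finset V → M)
    {A : Finset (Finset V)} {F : Finset (Finset s)} {C : Finset (Finset V)}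
    (hC : ∀ c ∈ C, ∀ x ∈ c, x ∉ s)
    (hAF : ∀ S ∈ A, S.subtype (· ∈ s) ∈ F ∧ S.filter (· ∉ s) ∈ C)
    (hFA : ∀ D ∈ F, ∀ c ∈ C, D.map (Function.Embedding.subtype _) ∪ c ∈ A) :
    ∑ S ∈ A, f S = ∑ p ∈ F ×ˢ C, f (p.1.map (Function.Embedding.subtype _) ∪ p.2) := by
  refine sum_nbij' (fun S => (S.subtype (· ∈ s), S.filter (· ∉ s)))
    (fun p => p.1.map (Function.Embedding.subtype _) ∪ p.2) (fun S hS => mem_product.2 (hAF S hS))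
    (fun p hp => hFA _ (mem_product.1 hp).1 _ (mem_product.1 hp).2)
    (fun S _ => map_subtype_union_filter_notMem S) (fun p hp => ?_)
    (fun S _ => by rw [map_subtype_union_filter_notMem])
  have hc := hC _ (mem_product.1 hp).2
  exact Prod.ext (subtype_map_union_of_notMem _ hc) (filter_map_union_of_notMem _ hc)

theorem card_and_sum_card_of_split {A : Finset (Finset V)} {F : Finset (Finset s)}
    {C : Finset (Finset V)} (hC : ∀ c ∈ C, ∀ x ∈ c, x ∉ s)
    (hAF : ∀ S ∈ A, S.subtype (· ∈ s) ∈ F ∧ S.filter (· ∉ s) ∈ C)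
    (hFA : ∀ D ∈ F, ∀ c ∈ C, D.map (Function.Embedding.subtype _) ∪ c ∈ A) :
    #A = #C * #F ∧ ∑ S ∈ A, #S = (∑ c ∈ C, #c) * #F + #C * ∑ D ∈ F, #D := by
  constructor
  · rw [card_eq_sum_ones, sum_eq_sum_product_of_split _ hC hAF hFA, ← card_eq_sum_ones,
      card_product, mul_comm]
  · rw [sum_eq_sum_product_of_split _ hC hAF hFA, sum_product]
    calc ∑ D ∈ F, ∑ c ∈ C, #(D.map (Function.Embedding.subtype _) ∪ c)
        = ∑ D ∈ F, ∑ c ∈ C, (#D + #c) :=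
          sum_congr rfl fun D _ => sum_congr rfl fun c hc => card_map_union_of_notMem D (hC c hc)
      _ = (∑ c ∈ C, #c) * #F + #C * ∑ D ∈ F, #D := by
          simp only [sum_add_distrib, sum_const, smul_eq_mul, ← mul_sum]
          ring

end Split

section LeafTraces

variable {V : Type*} [DecidableEq V]

/-- The possible traces `S ∩ (L ∪ {w})` of a dominating set `S`: all of `L` when `w ∉ S`,
otherwise `w` with an arbitrary set of its leaves. -/
def leafTraces (L : Finset V) (w : V) : Finset (Finset V) :=
  insert L (L.powerset.image (insert w))

variable {L : Finset V} {w : V}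

theorem mem_leafTraces {c : Finset V} :
    c ∈ leafTraces L w ↔ c = L ∨ ∃ A ⊆ L, insert w A = c := by
  simp [leafTraces]

theorem injOn_insert_powerset (hw : w ∉ L) : Set.InjOn (insert w) (L.powerset : Set (Finset V)) :=
  fun A hA B hB h => by
    rw [← erase_insert (fun h => hw (mem_powerset.1 hA h)),
      ← erase_insert (fun h => hw (mem_powerset.1 hB h)), h]

theorem notMem_image_insert_powerset (hw : w ∉ L) : L ∉ L.powerset.image (insert w) := by
  simp only [mem_image, mem_powerset, not_exists, not_and]
  exact fun A _ h => hw (h ▸ mem_insert_self w A)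

theorem card_leafTraces (hw : w ∉ L) : #(leafTraces L w) = 1 + 2 ^ #L := by
  rw [leafTraces, card_insert_of_notMem (notMem_image_insert_powerset hw),
    card_image_of_injOn (injOn_insert_powerset hw), card_powerset, add_comm]

theorem sum_card_leafTraces (hw : w ∉ L) (hL : L.Nonempty) :
    ∑ c ∈ leafTraces L w, #c = #L + (#L + 2) * 2 ^ (#L - 1) := by
  rw [leafTraces, sum_insert (notMem_image_insert_powerset hw),
    sum_image (injOn_insert_powerset hw)]
  have hcard : ∀ A ∈ L.powerset, #(insert w A) = #A + 1 := fun A hA =>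
    card_insert_of_notMem fun h => hw (mem_powerset.1 hA h)
  rw [sum_congr rfl hcard, sum_add_distrib, sum_card_powerset, sum_const, card_powerset,
    smul_eq_mul, mul_one]
  obtain ⟨n, hn⟩ : ∃ n, #L = n + 1 := Nat.exists_eq_succ_of_ne_zero hL.card_pos.ne'
  rw [hn, Nat.add_sub_cancel, pow_succ]
  ring

theorem subset_insert_of_mem_leafTraces {c : Finset V}
    (hc : c ∈ leafTraces L w) : c ⊆ insert w L := by
  rcases mem_leafTraces.1 hc with rfl | ⟨A, hA, rfl⟩
  exacts [subset_insert w c, insert_subset_insert w hA]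

end LeafTraces

section Domination

variable {V : Type*} [Fintype V] {G : SimpleGraph V} {v w x : V}

theorem mem_domSets {S : Finset V} : S ∈ domSets G ↔ ∀ v ∉ S, ∃ u ∈ S, G.Adj u v := by
  simp [domSets]

theorem IsLeaf.eq_of_adj (hv : IsLeaf G v) {a b : V} (ha : G.Adj a v) (hb : G.Adj b v) : a = b :=
  card_le_one.1 hv.le a (by simpa using ha.symm) b (by simpa using hb.symm)

theorem eq_of_adj_of_mem_leafNbrSet (hv : v ∈ leafNbrSet G w) {u : V} (hu : G.Adj u v) : u = w :=
  hv.2.eq_of_adj hu hv.1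

theorem mem_compl_leafNbrSet_union_iff :
    x ∈ (leafNbrSet G w ∪ {w})ᶜ ↔ x ∉ leafNbrSet G w ∧ x ≠ w := by
  simp only [Set.mem_compl_iff, Set.mem_union, Set.mem_singleton_iff, not_or]

theorem exists_isLeaf_adj_mem_compl (hv : v ∈ leafNbrSet G w)
    (hsupp : ∀ u ∈ G.neighborSet w \ leafNbrSet G w, IsSupport G u)
    (hwx : G.Adj w x) (hx : x ∉ leafNbrSet G w) :
    ∃ y ∈ (leafNbrSet G w ∪ {w})ᶜ, G.Adj x y ∧ IsLeaf G y := by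
  obtain ⟨y, hxy, hy⟩ := hsupp x ⟨hwx, hx⟩
  refine ⟨y, mem_compl_leafNbrSet_union_iff.2 ⟨fun hyL => ?_, ?_⟩, hxy, hy⟩
  · exact G.loopless.irrefl _ (eq_of_adj_of_mem_leafNbrSet hyL hxy ▸ hwx)
  · rintro rfl
    exact hx (hy.eq_of_adj hxy hv.1.symm ▸ hv)

theorem subtype_mem_domSets_induce (hv : v ∈ leafNbrSet G w)
    (hsupp : ∀ u ∈ G.neighborSet w \ leafNbrSet G w, IsSupport G u) {S : Finset V}
    (hS : S ∈ domSets G) :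
    S.subtype (· ∈ (leafNbrSet G w ∪ {w})ᶜ) ∈ domSets (G.induce (leafNbrSet G w ∪ {w})ᶜ) := by
  rw [mem_domSets] at hS ⊢
  rintro ⟨x, hxs⟩ hxD
  suffices ∃ u ∈ S, u ∈ (leafNbrSet G w ∪ {w})ᶜ ∧ G.Adj u x by
    obtain ⟨u, huS, hus, hux⟩ := this
    exact ⟨⟨u, hus⟩, mem_subtype.2 huS, hux⟩
  have hxS : x ∉ S := fun h => hxD (mem_subtype.2 h)
  obtain ⟨hxL, hxw⟩ := mem_compl_leafNbrSet_union_iff.1 hxs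
  obtain ⟨u, huS, hux⟩ := hS x hxS
  by_cases hus : u ∈ (leafNbrSet G w ∪ {w})ᶜ
  · exact ⟨u, huS, hus, hux⟩
  rcases not_and_or.1 (mem_compl_leafNbrSet_union_iff.not.1 hus) with huL | huw
  · exact absurd (eq_of_adj_of_mem_leafNbrSet (not_not.1 huL) hux.symm) hxw
  obtain rfl := not_not.1 huw
  obtain ⟨y, hys, hxy, hy⟩ := exists_isLeaf_adj_mem_compl hv hsupp hux hxL
  refine ⟨y, ?_, hys, hxy.symm⟩
  -- `x ∉ S` is the only neighbour of the leaf `y`, so `y` dominates itself.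
  by_contra hyS
  obtain ⟨z, hzS, hzy⟩ := hS y hyS
  exact hxS (hy.eq_of_adj hzy hxy ▸ hzS)

theorem filter_mem_leafTraces {S : Finset V} (hS : S ∈ domSets G) :
    S.filter (· ∉ (leafNbrSet G w ∪ {w})ᶜ) ∈ leafTraces (leafNbrSet G w).toFinset w := by
  rw [mem_domSets] at hS
  rw [mem_leafTraces]
  by_cases hwS : w ∈ S
  · refine Or.inr ⟨S.filter (· ∈ leafNbrSet G w), fun x hx => by simp_all, ?_⟩
    ext x
    by_cases hxw : x = w <;> simp_all
  · refine Or.inl (ext fun x => ?_)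
    simp only [mem_filter, mem_compl_leafNbrSet_union_iff, not_and_or, not_not, ne_eq,
      Set.mem_toFinset]
    constructor
    · rintro ⟨hxS, hxL | rfl⟩
      exacts [hxL, absurd hxS hwS]
    · intro hxL
      refine ⟨by_contra fun hxS => ?_, Or.inl hxL⟩
      obtain ⟨u, huS, hux⟩ := hS x hxS
      exact hwS (eq_of_adj_of_mem_leafNbrSet hxL hux ▸ huS)

theorem map_union_mem_domSets (hv : v ∈ leafNbrSet G w)
    {D : Finset ↥(leafNbrSet G w ∪ {w})ᶜ} (hD : D ∈ domSets (G.induce (leafNbrSet G w ∪ {w})ᶜ))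
    {c : Finset V} (hc : c ∈ leafTraces (leafNbrSet G w).toFinset w) :
    D.map (Function.Embedding.subtype _) ∪ c ∈ domSets G := by
  rw [mem_domSets] at hD ⊢
  intro x hx
  simp only [mem_union, mem_map, Function.Embedding.coe_subtype, not_or, not_exists,
    not_and] at hx
  by_cases hxs : x ∈ (leafNbrSet G w ∪ {w})ᶜ
  · obtain ⟨u, huD, hux⟩ := hD ⟨x, hxs⟩ fun h => hx.1 _ h rfl
    exact ⟨u, mem_union_left _ (mem_map_of_mem _ huD), hux⟩
  rw [mem_compl_leafNbrSet_union_iff, not_and_or, not_not, not_not] at hxs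
  rcases mem_leafTraces.1 hc, hxs with ⟨rfl | ⟨A, -, rfl⟩, hxL | rfl⟩
  · exact absurd (Set.mem_toFinset.2 hxL) hx.2
  · exact ⟨v, mem_union_right _ (Set.mem_toFinset.2 hv), hv.1.symm⟩
  · exact ⟨w, mem_union_right _ (mem_insert_self w A), hxL.1⟩
  · exact absurd (mem_insert_self x A) hx.2

end Domination

/-- Let `w` be a support vertex of `G` with exactly `t ≥ 1` leaf neighbors such that every
non-leaf neighbor of `w` is a support vertex, and let `H = G ∖ (L_G(w) ∪ {w})`.  Then
`|𝒟(G)| = (1+2^t)·|𝒟(H)|` and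
`Σ_{S∈𝒟(G)}|S| = (t + (t+2)·2^{t−1})·|𝒟(H)| + (1+2^t)·Σ_{S∈𝒟(H)}|S|`. -/
theorem domSets_support_vertex_counts {V : Type*} [Fintype V] (G : SimpleGraph V) (w : V)
    (t : ℕ) (ht : 1 ≤ t) (hcard : (leafNbrSet G w).ncard = t)
    (hsupp : ∀ u ∈ G.neighborSet w \ leafNbrSet G w, IsSupport G u) :
    (domSets G).card = (1 + 2 ^ t) * (domSets (G.induce ((leafNbrSet G w ∪ {w})ᶜ))).card ∧
      (∑ S ∈ domSets G, S.card) =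
        (t + (t + 2) * 2 ^ (t - 1)) * (domSets (G.induce ((leafNbrSet G w ∪ {w})ᶜ))).card +
          (1 + 2 ^ t) * ∑ S ∈ domSets (G.induce ((leafNbrSet G w ∪ {w})ᶜ)), S.card := by
  obtain ⟨v, hv⟩ := Set.nonempty_of_ncard_ne_zero (hcard ▸ (by omega : t ≠ 0))
  have hL : #(leafNbrSet G w).toFinset = t := by rwa [Set.ncard_eq_toFinset_card'] at hcard
  have hw : w ∉ (leafNbrSet G w).toFinset := fun h =>
    G.loopless.irrefl w (Set.mem_toFinset.1 h).1
  have htraces : ∀ c ∈ leafTraces (leafNbrSet G w).toFinset w, ∀ x ∈ c,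
      x ∉ (leafNbrSet G w ∪ {w})ᶜ := fun c hc x hx => by
    simpa [or_iff_not_imp_left] using subset_insert_of_mem_leafTraces hc hx
  obtain ⟨hcount, hsum⟩ := card_and_sum_card_of_split htraces
    (fun S hS => ⟨subtype_mem_domSets_induce hv hsupp hS, filter_mem_leafTraces hS⟩)
    (fun D hD c hc => map_union_mem_domSets hv hD hc)
  rw [card_leafTraces hw, hL] at hcount
  rw [card_leafTraces hw, sum_card_leafTraces hw ⟨v, Set.mem_toFinset.2 hv⟩, hL] at hsum
  exact ⟨hcount, hsum⟩
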